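/- Let A = ⟨Q, F, δ, γ⟩ be a well-structured pomset automaton and let q ∈ Q be a fork target (i.e., there exist p ∈ Q and φ ∈ M(Q) with q ∈ φ and γ(p, φ) ≠ ∅). Then every pomset in L_A(q) is a parallel prime (in particular non-empty and not parallel). -/
import Mathlib


namespace WBKA

/-- Series-parallel terms over an alphabet `A`. -/
inductive SPTerm (A : Type) : Type
  | one : SPTerm A
  | atom : A → SPTerm A
  | seq : SPTerm A → SPTerm A → SPTerm A
  | par : SPTerm A → SPTerm A → SPTerm A

/-- The congruence generated by the series-parallel pomset axioms:
associativity of both compositions, commutativity of parallel composition,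
and the empty pomset acting as unit for both. -/
inductive SPEquiv {A : Type} : SPTerm A → SPTerm A → Prop
  | refl (u : SPTerm A) : SPEquiv u u
  | symm {u v : SPTerm A} : SPEquiv u v → SPEquiv v u
  | trans {u v w : SPTerm A} : SPEquiv u v → SPEquiv v w → SPEquiv u w
  | seqCongr {u u' v v' : SPTerm A} :
      SPEquiv u u' → SPEquiv v v' → SPEquiv (u.seq v) (u'.seq v')
  | parCongr {u u' v v' : SPTerm A} :
      SPEquiv u u' → SPEquiv v v' → SPEquiv (u.par v) (u'.par v')
  | seqAssoc (u v w : SPTerm A) : SPEquiv ((u.seq v).seq w) (u.seq (v.seq w))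
  | parAssoc (u v w : SPTerm A) : SPEquiv ((u.par v).par w) (u.par (v.par w))
  | parComm (u v : SPTerm A) : SPEquiv (u.par v) (v.par u)
  | seqOneLeft (u : SPTerm A) : SPEquiv (SPTerm.one.seq u) u
  | seqOneRight (u : SPTerm A) : SPEquiv (u.seq SPTerm.one) u
  | parOne (u : SPTerm A) : SPEquiv (u.par SPTerm.one) u

instance spSetoid (A : Type) : Setoid (SPTerm A) :=
  ⟨SPEquiv, SPEquiv.refl, SPEquiv.symm, SPEquiv.trans⟩

/-- Series-parallel pomsets over `A`, as the free algebra on the sp-pomset axioms. -/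
def Pomset (A : Type) : Type := Quotient (spSetoid A)

namespace Pomset

variable {A : Type}

def mk (u : SPTerm A) : Pomset A := Quotient.mk (spSetoid A) u

/-- The empty pomset `1`. -/
def eps : Pomset A := mk SPTerm.one

/-- The primitive pomset consisting of a single event labelled `a`. -/
def atom (a : A) : Pomset A := mk (SPTerm.atom a)

/-- Sequential composition of pomsets. -/
def seq : Pomset A → Pomset A → Pomset A :=
  Quotient.lift₂ (fun u v => mk (u.seq v))
    (fun _ _ _ _ hu hv => Quotient.sound (SPEquiv.seqCongr hu hv))

/-- Parallel composition of pomsets. -/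
def par : Pomset A → Pomset A → Pomset A :=
  Quotient.lift₂ (fun u v => mk (u.par v))
    (fun _ _ _ _ hu hv => Quotient.sound (SPEquiv.parCongr hu hv))

/-- `U` is the empty pomset. -/
def IsEmptyP (U : Pomset A) : Prop := U = eps

/-- `U` is primitive: it consists of a single labelled event. -/
def Primitive (U : Pomset A) : Prop := ∃ a : A, U = atom a

/-- `U` is sequential: a sequential composition of two non-empty pomsets. -/
def Sequential (U : Pomset A) : Prop :=
  ∃ V W : Pomset A, V ≠ eps ∧ W ≠ eps ∧ U = seq V W

/-- `U` is parallel: a parallel composition of two non-empty pomsets. -/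
def Parallel (U : Pomset A) : Prop :=
  ∃ V W : Pomset A, V ≠ eps ∧ W ≠ eps ∧ U = par V W

/-- `U` is a sequential prime. -/
def SeqPrime (U : Pomset A) : Prop :=
  U ≠ eps ∧ ∀ V W : Pomset A, U = seq V W → V = eps ∨ W = eps

/-- `U` is a parallel prime. -/
def ParPrime (U : Pomset A) : Prop :=
  U ≠ eps ∧ ∀ V W : Pomset A, U = par V W → V = eps ∨ W = eps

/-- Sequential product of a list of pomsets. -/
def seqProd (l : List (Pomset A)) : Pomset A := l.foldr seq eps

/-- Parallel product of a list of pomsets. -/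
def parProd (l : List (Pomset A)) : Pomset A := l.foldr par eps

end Pomset

/-- Pointwise sequential composition of pomset languages. -/
def langSeq {A : Type} (L M : Set (Pomset A)) : Set (Pomset A) :=
  Set.image2 Pomset.seq L M

/-- Pointwise parallel composition of pomset languages. -/
def langPar {A : Type} (L M : Set (Pomset A)) : Set (Pomset A) :=
  Set.image2 Pomset.par L M

/-- `n`-fold sequential power of a language. -/
def langPow {A : Type} (L : Set (Pomset A)) : ℕ → Set (Pomset A)
  | 0 => {Pomset.eps}
  | n + 1 => langSeq L (langPow L n)

/-- Kleene closure of a pomset language. -/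
def langStar {A : Type} (L : Set (Pomset A)) : Set (Pomset A) :=
  ⋃ n : ℕ, langPow L n

/-- Series-rational expressions over `A`. -/
inductive SR (A : Type) : Type
  | zero : SR A
  | one : SR A
  | atom : A → SR A
  | plus : SR A → SR A → SR A
  | seq : SR A → SR A → SR A
  | par : SR A → SR A → SR A
  | star : SR A → SR A

/-- The sp-language semantics of series-rational expressions. -/
def sem {A : Type} : SR A → Set (Pomset A)
  | .zero => ∅
  | .one => {Pomset.eps}
  | .atom a => {Pomset.atom a}
  | .plus e f => sem e ∪ sem f
  | .seq e f => langSeq (sem e) (sem f)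
  | .par e f => langPar (sem e) (sem f)
  | .star e => langStar (sem e)

/-- The syntactic predicate `F` characterising acceptance of the empty pomset. -/
inductive EF {A : Type} : SR A → Prop
  | one : EF SR.one
  | plusLeft {e : SR A} (f : SR A) : EF e → EF (SR.plus e f)
  | plusRight (e : SR A) {f : SR A} : EF f → EF (SR.plus e f)
  | seq {e f : SR A} : EF e → EF f → EF (SR.seq e f)
  | par {e f : SR A} : EF e → EF f → EF (SR.par e f)
  | star (e : SR A) : EF (SR.star e)

/-- Pomset automata. -/
structure PA (A : Type) (Q : Type) where
  acc : Set Q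
  δ : Q → A → Set Q
  γ : Q → Multiset Q → Set Q

/-- The run relation of a pomset automaton. -/
inductive Run {A Q : Type} (M : PA A Q) : Q → Pomset A → Q → Prop
  | triv (q : Q) : Run M q Pomset.eps q
  | seqUnit {q : Q} {a : A} {q' : Q} :
      q' ∈ M.δ q a → Run M q (Pomset.atom a) q'
  | comp {q : Q} {U : Pomset A} {q'' : Q} {V : Pomset A} {q' : Q} :
      Run M q U q'' → Run M q'' V q' → Run M q (U.seq V) q'
  | parUnit {q q' : Q} (l : List (Q × Pomset A × Q)) :
      q' ∈ M.γ q (↑(l.map Prod.fst) : Multiset Q) →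
      (∀ x ∈ l, x.2.2 ∈ M.acc) →
      (∀ x ∈ l, Run M x.1 x.2.1 x.2.2) →
      Run M q (Pomset.parProd (l.map fun x => x.2.1)) q'

/-- Language of a state of a pomset automaton. -/
def PA.lang {A Q : Type} (M : PA A Q) (q : Q) : Set (Pomset A) :=
  {U | ∃ q' ∈ M.acc, Run M q U q'}

/-- The triple `q →^U q'` matches the trivial-run rule. -/
def TrivialRun {A Q : Type} (_M : PA A Q) (q : Q) (U : Pomset A) (q' : Q) : Prop :=
  U = Pomset.eps ∧ q = q'

/-- `q →^U q'` is a sequential unit run. -/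
def SeqUnitRun {A Q : Type} (M : PA A Q) (q : Q) (U : Pomset A) (q' : Q) : Prop :=
  ∃ a : A, U = Pomset.atom a ∧ q' ∈ M.δ q a

/-- `q →^U q'` is a parallel unit run. -/
def ParUnitRun {A Q : Type} (M : PA A Q) (q : Q) (U : Pomset A) (q' : Q) : Prop :=
  ∃ l : List (Q × Pomset A × Q),
    q' ∈ M.γ q (↑(l.map Prod.fst) : Multiset Q) ∧
    (∀ x ∈ l, x.2.2 ∈ M.acc ∧ Run M x.1 x.2.1 x.2.2) ∧
    U = Pomset.parProd (l.map fun x => x.2.1)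

/-- `q →^U q'` is a unit run: a sequential or a parallel unit run. -/
def UnitRun {A Q : Type} (M : PA A Q) (q : Q) (U : Pomset A) (q' : Q) : Prop :=
  SeqUnitRun M q U q' ∨ ParUnitRun M q U q'

/-- `q →^U q'` is a composite run: a sequential composition of two non-trivial runs. -/
def CompositeRun {A Q : Type} (M : PA A Q) (q : Q) (U : Pomset A) (q' : Q) : Prop :=
  ∃ (V W : Pomset A) (q'' : Q),
    U = V.seq W ∧ Run M q V q'' ∧ Run M q'' W q' ∧
    ¬ TrivialRun M q V q'' ∧ ¬ TrivialRun M q'' W q'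

/-- The support preorder: `Supports M q' q` means `q' ⪯ q`. -/
inductive Supports {A Q : Type} (M : PA A Q) : Q → Q → Prop
  | refl (q : Q) : Supports M q q
  | trans {q r p : Q} : Supports M q r → Supports M r p → Supports M q p
  | deltaStep {q : Q} {a : A} {q' : Q} : q' ∈ M.δ q a → Supports M q' q
  | gammaStep {q : Q} {φ : Multiset Q} {q' : Q} : q' ∈ M.γ q φ → Supports M q' q
  | forkStep {q : Q} {φ : Multiset Q} {r : Q} :
      r ∈ φ → (M.γ q φ).Nonempty → Supports M r q

/-- A pomset automaton is fork-acyclic when every fork target `r` of `q`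
satisfies `r ≺ q`, i.e. `q ⋠ r`. -/
def ForkAcyclic {A Q : Type} (M : PA A Q) : Prop :=
  ∀ (q : Q) (φ : Multiset Q) (r : Q),
    r ∈ φ → (M.γ q φ).Nonempty → ¬ Supports M q r

/-- A set of states is support-closed. -/
def SupportClosed {A Q : Type} (M : PA A Q) (S : Set Q) : Prop :=
  ∀ q ∈ S, ∀ q' : Q, Supports M q' q → q' ∈ S

/-- Restriction of a pomset automaton to a set of states. -/
def PA.restrict {A Q : Type} (M : PA A Q) (S : Set Q) : PA A {q : Q // q ∈ S} where
  acc := {q | q.val ∈ M.acc}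
  δ := fun q a => {r | r.val ∈ M.δ q.val a}
  γ := fun q φ => {r | r.val ∈ M.γ q.val (φ.map Subtype.val)}

/-- `n`-forking automata. -/
def NForking {A Q : Type} (M : PA A Q) (n : ℕ) : Prop :=
  ∀ (q : Q) (φ : Multiset Q), (M.γ q φ).Nonempty → n ≤ Multiset.card φ

/-- Parsimonious automata: no fork target accepts the empty pomset. -/
def Parsimonious {A Q : Type} (M : PA A Q) : Prop :=
  ∀ (p : Q) (φ : Multiset Q) (q : Q),
    q ∈ φ → (M.γ p φ).Nonempty → Pomset.eps ∉ M.lang q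

/-- Flat-branching automata: forks from fork targets never reach accepting states. -/
def FlatBranching {A Q : Type} (M : PA A Q) : Prop :=
  ∀ (p : Q) (φ : Multiset Q) (q : Q),
    q ∈ φ → (M.γ p φ).Nonempty → ∀ ψ : Multiset Q, M.γ q ψ ∩ M.acc = ∅

/-- Well-structured pomset automata. -/
def WellStructured {A Q : Type} (M : PA A Q) : Prop :=
  (∀ (q : Q) (φ : Multiset Q), (M.γ q φ).Nonempty → 2 ≤ Multiset.card φ) ∧
  ∀ (p : Q) (φ : Multiset Q) (q : Q), q ∈ φ → (M.γ p φ).Nonempty →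
    q ∉ M.acc ∧ ∀ ψ : Multiset Q, M.γ q ψ ∩ M.acc = ∅

/-- The relation `⇝` characterising runs labelled by the empty pomset. -/
inductive Leadsto {A Q : Type} (M : PA A Q) : Q → Q → Prop
  | refl (p : Q) : Leadsto M p p
  | trans {p r q : Q} : Leadsto M p r → Leadsto M r q → Leadsto M p q
  | fork {p q : Q} (l : List (Q × Q)) :
      q ∈ M.γ p (↑(l.map Prod.fst) : Multiset Q) →
      (∀ x ∈ l, x.2 ∈ M.acc) →
      (∀ x ∈ l, Leadsto M x.1 x.2) →
      Leadsto M p q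

/-- Concatenate each expression of a set with `f` on the right. -/
def seqAfter {A : Type} (T : Set (SR A)) (f : SR A) : Set (SR A) :=
  (fun g => SR.seq g f) '' T

/-- Antimirov-style sequential derivatives of sr-expressions. -/
def deltaS {A : Type} : SR A → A → Set (SR A)
  | .zero, _ => ∅
  | .one, _ => ∅
  | .atom b, a => {g | g = SR.one ∧ a = b}
  | .plus e f, a => deltaS e a ∪ deltaS f a
  | .seq e f, a => seqAfter (deltaS e a) f ∪ {g | g ∈ deltaS f a ∧ EF e}
  | .par _ _, _ => ∅
  | .star e, a => seqAfter (deltaS e a) (SR.star e)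

/-- Antimirov-style parallel derivatives of sr-expressions. -/
def gammaS {A : Type} : SR A → Multiset (SR A) → Set (SR A)
  | .zero, _ => ∅
  | .one, _ => ∅
  | .atom _, _ => ∅
  | .plus e f, φ => gammaS e φ ∪ gammaS f φ
  | .seq e f, φ => seqAfter (gammaS e φ) f ∪ {g | g ∈ gammaS f φ ∧ EF e}
  | .par e f, φ => {g | g = SR.one ∧ φ = {e, f}}
  | .star e, φ => seqAfter (gammaS e φ) (SR.star e)

/-- The syntactic pomset automaton on sr-expressions. -/
def synPA (A : Type) : PA A (SR A) where
  acc := {e | EF e}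
  δ := deltaS
  γ := gammaS

/-- The parallel-nesting depth of an sr-expression. -/
def pdepth {A : Type} : SR A → ℕ
  | .zero => 0
  | .one => 0
  | .atom _ => 0
  | .plus e f => max (pdepth e) (pdepth f)
  | .seq e f => max (pdepth e) (pdepth f)
  | .par e f => max (pdepth e) (pdepth f) + 1
  | .star e => pdepth e

/-- A substitution `ζ : Σ → 2^{SP(Δ)}` is atomic. -/
def Atomic {A B : Type} (ζ : A → Set (Pomset B)) : Prop :=
  (∀ a : A, ∀ U ∈ ζ a, Pomset.SeqPrime U) ∧
  (∀ a b : A, (ζ a ∩ ζ b).Nonempty ↔ a = b)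

/-- Extension of a substitution to words. -/
def substWord {A B : Type} (ζ : A → Set (Pomset B)) : List A → Set (Pomset B)
  | [] => {Pomset.eps}
  | a :: w => langSeq (ζ a) (substWord ζ w)

/-- Extension of a substitution to word languages. -/
def substLang {A B : Type} (ζ : A → Set (Pomset B)) (L : Set (List A)) :
    Set (Pomset B) :=
  ⋃ w ∈ L, substWord ζ w

/-- `L_A(α)` for a set `α` of states: the atom language of `α`. -/
def atomLang {Q U : Type} (LA : Q → Set U) (α : Set Q) : Set U :=
  (⋂ q ∈ α, LA q) \ (⋃ (q : Q) (_ : q ∉ α), LA q)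


section Aux

variable {A : Type}

/-- Number of top-level parallel components of a term (0 iff empty). -/
def cT : SPTerm A → ℕ
  | .one => 0
  | .atom _ => 1
  | .seq u v => if cT u = 0 then cT v else if cT v = 0 then cT u else 1
  | .par u v => cT u + cT v

theorem cT_equiv {u v : SPTerm A} (h : SPEquiv u v) : cT u = cT v := by
  induction h with
  | refl => rfl
  | symm _ ih => exact ih.symm
  | trans _ _ ih1 ih2 => exact ih1.trans ih2
  | seqCongr _ _ ih1 ih2 => simp only [cT, ih1, ih2]
  | parCongr _ _ ih1 ih2 => simp only [cT, ih1, ih2]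
  | seqAssoc u v w =>
      by_cases hu : cT u = 0 <;> by_cases hv : cT v = 0 <;> by_cases hw : cT w = 0 <;>
        simp [cT, hu, hv, hw]
  | parAssoc u v w => simp [cT, Nat.add_assoc]
  | parComm u v => simp [cT, Nat.add_comm]
  | seqOneLeft u => simp [cT]
  | seqOneRight u => by_cases h : cT u = 0 <;> simp [cT, h]
  | parOne u => simp [cT]

/-- The invariant lifted to pomsets. -/
def cP : Pomset A → ℕ := Quotient.lift cT (fun _ _ h => cT_equiv h)

theorem cP_eps : cP (Pomset.eps : Pomset A) = 0 := rfl

theorem cP_atom (a : A) : cP (Pomset.atom a) = 1 := rfl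

theorem cP_par (U V : Pomset A) : cP (U.par V) = cP U + cP V := by
  induction U using Quotient.inductionOn
  induction V using Quotient.inductionOn
  rfl

theorem cP_seq (U V : Pomset A) :
    cP (U.seq V) = if cP U = 0 then cP V else if cP V = 0 then cP U else 1 := by
  induction U using Quotient.inductionOn
  induction V using Quotient.inductionOn
  rfl

theorem equiv_one_of_cT_eq_zero {t : SPTerm A} (h : cT t = 0) : SPEquiv t SPTerm.one := by
  induction t with
  | one => exact SPEquiv.refl _
  | atom a => simp [cT] at h
  | seq u v ihu ihv =>
      by_cases hu : cT u = 0
      · simp [cT, hu] at h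
        exact SPEquiv.trans (SPEquiv.seqCongr (ihu hu) (ihv h)) (SPEquiv.seqOneLeft _)
      · simp only [cT, hu, if_false] at h
        by_cases hv : cT v = 0 <;> simp [hv] at h
        exact absurd h hu
  | par u v ihu ihv =>
      simp only [cT, Nat.add_eq_zero] at h
      exact SPEquiv.trans (SPEquiv.parCongr (ihu h.1) (ihv h.2)) (SPEquiv.parOne _)

theorem eps_of_cP_eq_zero {U : Pomset A} (h : cP U = 0) : U = Pomset.eps := by
  induction U using Quotient.inductionOn with
  | h t => exact Quotient.sound (equiv_one_of_cT_eq_zero h)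

theorem cP_eq_zero_iff {U : Pomset A} : cP U = 0 ↔ U = Pomset.eps :=
  ⟨eps_of_cP_eq_zero, fun h => h ▸ cP_eps⟩

theorem seq_eps_left (U : Pomset A) : Pomset.seq Pomset.eps U = U := by
  induction U using Quotient.inductionOn with
  | h t => exact Quotient.sound (SPEquiv.seqOneLeft t)

theorem seq_eps_right (U : Pomset A) : Pomset.seq U Pomset.eps = U := by
  induction U using Quotient.inductionOn with
  | h t => exact Quotient.sound (SPEquiv.seqOneRight t)

theorem parPrime_of_cP_eq_one {U : Pomset A} (h : cP U = 1) : Pomset.ParPrime U := by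
  constructor
  · intro he; rw [he, cP_eps] at h; exact one_ne_zero h.symm
  · intro V W hVW
    rw [hVW, cP_par] at h
    rcases Nat.add_eq_one_iff.mp h with ⟨h1, _⟩ | ⟨_, h1⟩
    · exact Or.inl (eps_of_cP_eq_zero h1)
    · exact Or.inr (eps_of_cP_eq_zero h1)

theorem parPrime_of_sequential {U : Pomset A} (h : Pomset.Sequential U) :
    Pomset.ParPrime U := by
  obtain ⟨V, W, hV, hW, rfl⟩ := h
  apply parPrime_of_cP_eq_one
  rw [cP_seq, if_neg (fun h0 => hV (eps_of_cP_eq_zero h0)),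
    if_neg (fun h0 => hW (eps_of_cP_eq_zero h0))]

end Aux

section RunLemmas

variable {A Q : Type} {M : PA A Q}

/-- In a well-structured automaton, `eps`-labelled runs do not move. -/
theorem run_eps_eq (hws : WellStructured M) :
    ∀ {p : Q} {U : Pomset A} {p' : Q}, Run M p U p' → U = Pomset.eps → p = p' := by
  intro p U p' h
  induction h with
  | triv q => intro _; rfl
  | @seqUnit q a q' hmem =>
      intro he
      have := congrArg cP he
      rw [cP_atom, cP_eps] at this
      exact absurd this one_ne_zero
  | @comp q U q'' V q' h1 h2 ih1 ih2 =>
      intro he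
      have h0 := congrArg cP he
      rw [cP_seq, cP_eps] at h0
      have hU : cP U = 0 := by
        by_cases hu : cP U = 0
        · exact hu
        · rw [if_neg hu] at h0
          by_cases hv : cP V = 0 <;> simp [hv] at h0
          · exact absurd h0 hu
      have hV : cP V = 0 := by
        rw [if_pos hU] at h0; exact h0
      exact (ih1 (eps_of_cP_eq_zero hU)).trans (ih2 (eps_of_cP_eq_zero hV))
  | @parUnit q q' l hγ hacc hrun ih =>
      intro he
      exfalso
      have hcard : 2 ≤ Multiset.card (↑(l.map Prod.fst) : Multiset Q) :=
        hws.1 q _ ⟨q', hγ⟩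
      have hlen : 2 ≤ l.length := by simpa using hcard
      obtain ⟨x, t, rfl⟩ : ∃ x t, l = x :: t := by
        cases l with
        | nil => simp at hlen
        | cons x t => exact ⟨x, t, rfl⟩
      have h0 := congrArg cP he
      rw [cP_eps] at h0
      have hx : cP x.2.1 = 0 := by
        simp only [List.map_cons, Pomset.parProd, List.foldr_cons, cP_par,
          Nat.add_eq_zero] at h0
        exact h0.1
      have hx1 : x.1 = x.2.2 := ih x (by simp) (eps_of_cP_eq_zero hx)
      have hmem : x.1 ∈ (↑((x :: t).map Prod.fst) : Multiset Q) := by simp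
      have := (hws.2 q _ x.1 hmem ⟨q', hγ⟩).1
      exact this (hx1 ▸ hacc x (by simp))

/-- Structure of runs in a well-structured automaton. -/
theorem run_structure (hws : WellStructured M) :
    ∀ {p : Q} {U : Pomset A} {p' : Q}, Run M p U p' →
      U = Pomset.eps ∨ Pomset.Primitive U ∨ Pomset.Sequential U ∨
        ∃ ψ : Multiset Q, p' ∈ M.γ p ψ := by
  intro p U p' h
  induction h with
  | triv q => exact Or.inl rfl
  | @seqUnit q a q' hmem => exact Or.inr (Or.inl ⟨a, rfl⟩)
  | @comp q U q'' V q' h1 h2 ih1 ih2 =>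
      by_cases hU : U = Pomset.eps
      · have hq : q = q'' := run_eps_eq hws h1 hU
        subst hq
        rw [hU, seq_eps_left]
        exact ih2
      · by_cases hV : V = Pomset.eps
        · have hq : q'' = q' := run_eps_eq hws h2 hV
          subst hq
          rw [hV, seq_eps_right]
          exact ih1
        · exact Or.inr (Or.inr (Or.inl ⟨U, V, hU, hV, rfl⟩))
  | @parUnit q q' l hγ hacc hrun ih =>
      exact Or.inr (Or.inr (Or.inr ⟨_, hγ⟩))

end RunLemmas


/-- In a well-structured automaton, every pomset in the language of a fork
target is a parallel prime. -/
theorem fork_target_lang_parallel_prime {A Q : Type} (M : PA A Q)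
    (hws : WellStructured M) (p q : Q) (φ : Multiset Q)
    (hq : q ∈ φ) (hγ : (M.γ p φ).Nonempty) :
    ∀ U ∈ M.lang q, Pomset.ParPrime U := by
  intro U hU
  obtain ⟨q', hacc, hrun⟩ := hU
  rcases run_structure hws hrun with he | ⟨a, rfl⟩ | hseq | ⟨ψ, hmem⟩
  · exfalso
    have hq' : q = q' := run_eps_eq hws hrun he
    exact (hws.2 p φ q hq hγ).1 (hq' ▸ hacc)
  · exact parPrime_of_cP_eq_one (cP_atom a)
  · exact parPrime_of_sequential hseq
  · exfalso
    have hempty := (hws.2 p φ q hq hγ).2 ψ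
    have : q' ∈ M.γ q ψ ∩ M.acc := ⟨hmem, hacc⟩
    rw [hempty] at this
    exact this

end WBKA
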